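/- arXiv:1407.5122 — 2 statements merged into one kernel-verified Lean document; each statement's English description precedes it below -/
import Mathlib

section
/- Let m ≥ 2 and let Δ : [1, 3m-2] → {0,1} be a 2-coloring. If there is no monochromatic m-subset B ⊆ [1, 3m-2] with diam(B) ≥ 2m-2, then there exist monochromatic m-subsets D₁, D₂ ⊆ [1, 3m-2] with max(D₁) < min(D₂) and diam(D₁) = diam(D₂) = m-1. -/
open Finset

/-- diameter of a finite set of naturals: max - min (0 for ∅). -/
def diam (X : Finset ℕ) : ℕ := WithBot.unbotD 0 X.max - WithTop.untopD 0 X.min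

/-- B is monochromatic under Δ. -/
def Mono (Δ : ℕ → Fin 2) (B : Finset ℕ) : Prop := ∃ c, ∀ x ∈ B, Δ x = c

/-- X <_p Y : every element of X precedes every element of Y. -/
def PLt (X Y : Finset ℕ) : Prop := ∀ x ∈ X, ∀ y ∈ Y, x < y

/-!
A monochromatic set with at least `m` elements cannot contain two points at distance `≥ 2m - 2`,
since these two points extend to a monochromatic `m`-subset of diameter `≥ 2m - 2`. Hence such a
set fits in fewer than `2m - 2` consecutive integers. If one colour class of `[1, 3m - 2]` had
fewer than `m` elements, the other would have `≥ 2m - 1`, which is impossible; so every colour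
class is this narrow. Then `1` and `3m - 2` get different colours, every `x ≤ m` gets the colour
of `1` and every `x ≥ 2m - 1` that of `3m - 2`: take `D₁ = [1, m]` and `D₂ = [2m - 1, 3m - 2]`.
-/

lemma diam_eq_max'_sub_min' {B : Finset ℕ} (hB : B.Nonempty) : diam B = B.max' hB - B.min' hB := by
  rw [diam, ← coe_max' hB, ← coe_min' hB]
  rfl

lemma sub_le_diam {B : Finset ℕ} {x y : ℕ} (hx : x ∈ B) (hy : y ∈ B) : y - x ≤ diam B := by
  rw [diam_eq_max'_sub_min' ⟨x, hx⟩]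
  exact tsub_le_tsub (le_max' B y hy) (min'_le B x hx)

lemma diam_Icc {a b : ℕ} (h : a ≤ b) : diam (Icc a b) = b - a := by
  rw [diam_eq_max'_sub_min' (nonempty_Icc.mpr h), (max'_eq_iff _ _ b).mpr,
    (min'_eq_iff _ _ a).mpr] <;> simp_all

lemma card_le_of_forall_sub_lt {S : Finset ℕ} {d : ℕ} (h : ∀ x ∈ S, ∀ y ∈ S, y - x < d) :
    #S ≤ d := by
  rcases S.eq_empty_or_nonempty with rfl | hS
  · simp
  have hsub : S ⊆ Ico (S.min' hS) (S.min' hS + d) := fun y hy =>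
    mem_Ico.mpr ⟨min'_le S y hy, by have := h _ (min'_mem S hS) y hy; omega⟩
  simpa using card_le_card hsub

lemma mono_filter_ne (Δ : ℕ → Fin 2) (U : Finset ℕ) (c : Fin 2) :
    Mono Δ (U.filter (Δ · ≠ c)) :=
  ⟨c + 1, fun x hx => by have := (mem_filter.mp hx).2; omega⟩

section NoWideMono

variable {U : Finset ℕ} {Δ : ℕ → Fin 2} {k d : ℕ}

lemma sub_lt_of_mono_of_le_card (hk : 2 ≤ k)
    (h : ¬ ∃ B : Finset ℕ, B ⊆ U ∧ #B = k ∧ Mono Δ B ∧ d ≤ diam B)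
    {S : Finset ℕ} (hSU : S ⊆ U) (hS : Mono Δ S) (hkS : k ≤ #S)
    {x y : ℕ} (hx : x ∈ S) (hy : y ∈ S) : y - x < d := by
  by_contra! hxy
  have hpair : {x, y} ⊆ S := insert_subset hx (singleton_subset_iff.mpr hy)
  obtain ⟨B, hpairB, hBS, hBk⟩ :=
    exists_subsuperset_card_eq hpair (card_le_two.trans hk) hkS
  obtain ⟨c, hc⟩ := hS
  exact h ⟨B, hBS.trans hSU, hBk, ⟨c, fun z hz => hc z (hBS hz)⟩,
    hxy.trans (sub_le_diam (hpairB (by simp)) (hpairB (by simp)))⟩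

lemma le_card_filter_eq (hk : 2 ≤ k) (hkd : k ≤ d + 1) (hU : k + d ≤ #U)
    (h : ¬ ∃ B : Finset ℕ, B ⊆ U ∧ #B = k ∧ Mono Δ B ∧ d ≤ diam B) (c : Fin 2) :
    k ≤ #(U.filter (Δ · = c)) := by
  by_contra! hc
  have hsplit : #(U.filter (Δ · = c)) + #(U.filter (Δ · ≠ c)) = #U :=
    card_filter_add_card_filter_not _
  have hnarrow := card_le_of_forall_sub_lt fun x hx y hy =>
    sub_lt_of_mono_of_le_card hk h (filter_subset _ U) (mono_filter_ne Δ U c) (by omega) hx hy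
  omega

lemma sub_lt_of_color_eq (hk : 2 ≤ k) (hkd : k ≤ d + 1) (hU : k + d ≤ #U)
    (h : ¬ ∃ B : Finset ℕ, B ⊆ U ∧ #B = k ∧ Mono Δ B ∧ d ≤ diam B)
    {x y : ℕ} (hx : x ∈ U) (hy : y ∈ U) (hxy : Δ x = Δ y) : y - x < d :=
  sub_lt_of_mono_of_le_card hk h (filter_subset _ U) ⟨Δ y, fun _ hz => (mem_filter.mp hz).2⟩
    (le_card_filter_eq hk hkd hU h (Δ y)) (mem_filter.mpr ⟨hx, hxy⟩) (mem_filter.mpr ⟨hy, rfl⟩)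

end NoWideMono

theorem stmt1 (m : ℕ) (hm : 2 ≤ m) (Δ : ℕ → Fin 2)
    (h : ¬ ∃ B : Finset ℕ, B ⊆ Finset.Icc 1 (3 * m - 2) ∧ B.card = m ∧ Mono Δ B ∧
      2 * m - 2 ≤ diam B) :
    ∃ D₁ D₂ : Finset ℕ, D₁ ⊆ Finset.Icc 1 (3 * m - 2) ∧ D₂ ⊆ Finset.Icc 1 (3 * m - 2) ∧
      D₁.card = m ∧ D₂.card = m ∧ Mono Δ D₁ ∧ Mono Δ D₂ ∧ PLt D₁ D₂ ∧
      diam D₁ = m - 1 ∧ diam D₂ = m - 1 := by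
  have hnarrow : ∀ x y, 1 ≤ x → y ≤ 3 * m - 2 → 2 * m - 2 ≤ y - x → Δ x ≠ Δ y :=
    fun x y hx hy hxy hΔ => absurd (sub_lt_of_color_eq hm (by omega)
      (by simp only [Nat.card_Icc]; omega) h (by simp; omega) (by simp; omega) hΔ) (by omega)
  have hends := hnarrow 1 (3 * m - 2) le_rfl le_rfl (by omega)
  have hlow : ∀ x ∈ Icc 1 m, Δ x = Δ 1 := fun x hx => by
    have := hnarrow x (3 * m - 2) (mem_Icc.mp hx).1 le_rfl (by simp at hx; omega)
    omega
  have hhigh : ∀ x ∈ Icc (2 * m - 1) (3 * m - 2), Δ x = Δ (3 * m - 2) := fun x hx => by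
    have := hnarrow 1 x le_rfl (mem_Icc.mp hx).2 (by simp at hx; omega)
    omega
  refine ⟨Icc 1 m, Icc (2 * m - 1) (3 * m - 2), Icc_subset_Icc le_rfl (by omega),
    Icc_subset_Icc (by omega) le_rfl, by simp, by simp; omega, ⟨_, hlow⟩, ⟨_, hhigh⟩,
    fun x hx y hy => by simp at hx hy; omega, diam_Icc (by omega), ?_⟩
  rw [diam_Icc (by omega)]
  omega
end

section
/- Let m ≥ 2 and let Δ : [1, 3m-2] → {0,1} be a 2-coloring such that each color class has at least m elements and there is no monochromatic m-subset B with diam(B) ≥ 2m-2. If Δ(1) = 1, then the largest element colored 1 is at most 2m-2, Δ(3m-2) = 0, and the smallest element colored 0 is at least m+1. -/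
open Finset

lemma diam_eq_max'_sub_min'_s2 {X : Finset ℕ} (hX : X.Nonempty) : diam X = X.max' hX - X.min' hX := by
  rw [diam, ← coe_max' hX, ← coe_min' hX]
  rfl

lemma sub_le_diam_s2 {X : Finset ℕ} {a b : ℕ} (ha : a ∈ X) (hb : b ∈ X) : b - a ≤ diam X := by
  rw [diam_eq_max'_sub_min'_s2 ⟨a, ha⟩]
  have := X.min'_le a ha
  have := X.le_max' b hb
  omega

lemma exists_subset_card_eq_of_mem {α : Type*} [DecidableEq α] {s : Finset α} {a b : α} {m : ℕ}
    (ha : a ∈ s) (hb : b ∈ s) (hm : 2 ≤ m) (hms : m ≤ #s) :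
    ∃ B ⊆ s, a ∈ B ∧ b ∈ B ∧ #B = m := by
  have hpair : #({a, b} : Finset α) ≤ m := (card_le_two).trans hm
  obtain ⟨B, hab, hBs, hB⟩ := exists_subsuperset_card_eq (insert_subset ha (singleton_subset_iff.2 hb))
    hpair hms
  exact ⟨B, hBs, hab (mem_insert_self a _), hab (mem_insert_of_mem (mem_singleton_self b)), hB⟩

lemma sub_lt_of_same_color {S : Finset ℕ} {Δ : ℕ → Fin 2} {m d : ℕ} {c : Fin 2} (hm : 2 ≤ m)
    (hc : m ≤ #(S.filter fun x => Δ x = c))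
    (h : ¬ ∃ B ⊆ S, #B = m ∧ Mono Δ B ∧ d ≤ diam B)
    {a b : ℕ} (ha : a ∈ S) (hb : b ∈ S) (hΔa : Δ a = c) (hΔb : Δ b = c) : b - a < d := by
  by_contra! hd
  obtain ⟨B, hBC, haB, hbB, hB⟩ :=
    exists_subset_card_eq_of_mem (mem_filter.2 ⟨ha, hΔa⟩) (mem_filter.2 ⟨hb, hΔb⟩) hm hc
  exact h ⟨B, hBC.trans (filter_subset _ _), hB, ⟨c, fun x hx => (mem_filter.1 (hBC hx)).2⟩,
    hd.trans (sub_le_diam_s2 haB hbB)⟩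

theorem stmt2 (m : ℕ) (hm : 2 ≤ m) (Δ : ℕ → Fin 2)
    (hcolors : ∀ c : Fin 2, m ≤ ((Finset.Icc 1 (3 * m - 2)).filter (fun x => Δ x = c)).card)
    (h : ¬ ∃ B : Finset ℕ, B ⊆ Finset.Icc 1 (3 * m - 2) ∧ B.card = m ∧ Mono Δ B ∧
      2 * m - 2 ≤ diam B)
    (h1 : Δ 1 = 1) :
    (∀ x ∈ Finset.Icc 1 (3 * m - 2), Δ x = 1 → x ≤ 2 * m - 2) ∧
    Δ (3 * m - 2) = 0 ∧
    (∀ x ∈ Finset.Icc 1 (3 * m - 2), Δ x = 0 → m + 1 ≤ x) := by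
  have close {c : Fin 2} {a b : ℕ} (ha : a ∈ Icc 1 (3 * m - 2)) (hb : b ∈ Icc 1 (3 * m - 2))
      (hΔa : Δ a = c) (hΔb : Δ b = c) : b - a < 2 * m - 2 :=
    sub_lt_of_same_color hm (hcolors c) (by simpa only [exists_prop] using h) ha hb hΔa hΔb
  have hone : 1 ∈ Icc 1 (3 * m - 2) := by simp only [mem_Icc]; omega
  have hlast : 3 * m - 2 ∈ Icc 1 (3 * m - 2) := by simp only [mem_Icc]; omega
  have color_one (x) (hx : x ∈ Icc 1 (3 * m - 2)) (hΔx : Δ x = 1) : x ≤ 2 * m - 2 := by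
    have := close hone hx h1 hΔx
    omega
  have hΔlast : Δ (3 * m - 2) = 0 := by
    refine (Fin.exists_fin_two.1 ⟨_, rfl⟩).resolve_right fun hΔ => ?_
    have := color_one _ hlast hΔ
    omega
  refine ⟨color_one, hΔlast, fun x hx hΔx => ?_⟩
  have := close hx hlast hΔx hΔlast
  omega
end
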